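/- In the polynomial ring 𝔽₇[t₁,…,t₈][x₁₂,x₁₃,x₁₄,x₁₅,x₂₃,x₂₄,x₂₅,x₃₄,x₃₅,x₄₅], let Q = t₁x₂₄x₃₄ + t₂x₁₂x₁₅ + t₃x₁₃x₃₅ + t₄x₂₅² + t₅x₂₅x₄₅ + t₆x₁₄x₁₅ + t₇x₄₅² + t₈x₂₃x₂₄. At the point of 𝔽₇[t₁,…,t₈]¹⁰ with x₁₂ = t₆, x₁₄ = −t₂ and all other coordinates equal to 0: Q vanishes, all five Plücker quadrics q₁,…,q₅ vanish, and all ten partial derivatives ∂Q/∂x_{ij} vanish. (Hence this point of ℙ⁹ is a singular point of Gr(2,5) ∩ {Q = 0} over 𝔽₇(t₁,…,t₈).) -/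

import Mathlib

noncomputable section

open MvPolynomial

/-- The coefficient ring `𝔽₇[t₁,…,t₈]`. -/
abbrev R18 : Type := MvPolynomial (Fin 8) (ZMod 7)

/-- The parameter `tᵢ`, viewed as a constant in
`𝔽₇[t₁,…,t₈][x₁₂,x₁₃,x₁₄,x₁₅,x₂₃,x₂₄,x₂₅,x₃₄,x₃₅,x₄₅]`
(the ten Plücker variables are indexed `0,…,9` in the displayed order). -/
def T18 (i : Fin 8) : MvPolynomial (Fin 10) R18 := C (X i)

/-- `Q = t₁x₂₄x₃₄ + t₂x₁₂x₁₅ + t₃x₁₃x₃₅ + t₄x₂₅² + t₅x₂₅x₄₅ + t₆x₁₄x₁₅ + t₇x₄₅²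
  + t₈x₂₃x₂₄`. -/
def Q18 : MvPolynomial (Fin 10) R18 :=
  T18 0 * (X 5 * X 7) + T18 1 * (X 0 * X 3) + T18 2 * (X 1 * X 8) + T18 3 * (X 6 * X 6) +
  T18 4 * (X 6 * X 9) + T18 5 * (X 2 * X 3) + T18 6 * (X 9 * X 9) + T18 7 * (X 4 * X 5)

/-- The five Plücker quadrics `q₁,…,q₅` in the variables
`x₁₂,x₁₃,x₁₄,x₁₅,x₂₃,x₂₄,x₂₅,x₃₄,x₃₅,x₄₅` (indexed `0,…,9`). -/
def plucker18 : Fin 5 → MvPolynomial (Fin 10) R18 :=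
  ![X 4 * X 9 - X 5 * X 8 + X 6 * X 7,
    X 1 * X 9 - X 2 * X 8 + X 3 * X 7,
    X 0 * X 9 - X 2 * X 6 + X 3 * X 5,
    X 0 * X 8 - X 1 * X 6 + X 3 * X 4,
    X 0 * X 7 - X 1 * X 5 + X 2 * X 4]

/-- The point with `x₁₂ = t₆`, `x₁₄ = −t₂` and all other coordinates zero. -/
def pt18 : Fin 10 → R18 :=
  ![X 5, 0, -(X 1), 0, 0, 0, 0, 0, 0, 0]

/-! The point is `e₁ ∧ (t₆e₂ − t₂e₄)`, so it lies on `Gr(2,5)`. It also lies on the line where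
only `x₁₂, x₁₄` are nonzero, and every monomial of `Q` except those of `x₁₅(t₂x₁₂ + t₆x₁₄)` is a
product of two coordinates vanishing on that line. So the only partial derivative of `Q` that
can survive there is `∂Q/∂x₁₅ = t₂x₁₂ + t₆x₁₄`, which the point was chosen to kill. -/

-- `![a, b, c, d, 0, …]` are the Plücker coordinates of `e₁ ∧ (a e₂ + b e₃ + c e₄ + d e₅)`.
theorem eval_plucker18_e1_wedge_eq_zero (a b c d : R18) (j : Fin 5) :
    eval ![a, b, c, d, 0, 0, 0, 0, 0, 0] (plucker18 j) = 0 := by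
  fin_cases j <;> simp [plucker18]

theorem eval_Q18_x12_x14_line_eq_zero (a b : R18) :
    eval ![a, 0, b, 0, 0, 0, 0, 0, 0, 0] Q18 = 0 := by
  simp [Q18]

theorem eval_pderiv_Q18_x12_x14_line (a b : R18) (i : Fin 10) :
    eval ![a, 0, b, 0, 0, 0, 0, 0, 0, 0] (pderiv i Q18) =
      (Pi.single 3 (X 1 * a + X 5 * b) : Fin 10 → R18) i := by
  fin_cases i <;> simp [Q18, T18, pderiv_X]

/-- At the point `x₁₂ = t₆`, `x₁₄ = −t₂` (all other coordinates `0`), the quadric `Q`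
of family (5) for `p = 7` vanishes, all five Plücker quadrics vanish, and all ten partial
derivatives of `Q` vanish: this point is a singular point of `Gr(2,5) ∩ {Q = 0}`. -/
theorem family5_p7_singular_point :
    eval pt18 Q18 = 0 ∧
    (∀ j : Fin 5, eval pt18 (plucker18 j) = 0) ∧
    (∀ i : Fin 10, eval pt18 (pderiv i Q18) = 0) := by
  refine ⟨eval_Q18_x12_x14_line_eq_zero _ _, eval_plucker18_e1_wedge_eq_zero _ 0 _ 0, fun i => ?_⟩
  rw [pt18, eval_pderiv_Q18_x12_x14_line]
  simp [mul_comm]
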